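/- Let d, Q ≥ 1 and r ≥ 0 be integers, and consider the rooted d-tree T_r. If S is a nonempty set of unrooted vertices of T_r that minimizes dens_{T_r}(S) among all nonempty sets of unrooted vertices, and S has maximum cardinality among such minimizers, then for every 1 ≤ i ≤ Q either S ∩ σ_i = ∅ or σ_i ⊆ S; that is, S is a union of some of the blocks σ_1, …, σ_Q. -/

import Mathlib

/-- The block `σ_i = {id+1, id+2, …, (i+1)d}` of vertices. -/
def sigmaB (d i : ℕ) : Finset ℕ := Finset.Icc (i * d + 1) ((i + 1) * d)

/-- The `d`-tree `T_0` on vertex set `{1, …, d(Q+1)}`: its simplices are the nonempty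
subsets `σ` with `max σ − min σ ≤ d` (equivalently, `a ≤ b + d` for all `a, b ∈ σ`). -/
def T0 (d Q : ℕ) : Finset (Finset ℕ) :=
  (Finset.Icc 1 (d * (Q + 1))).powerset.filter
    (fun σ => σ.Nonempty ∧ ∀ a ∈ σ, ∀ b ∈ σ, a ≤ b + d)

/-- The `k`-th attached root vertex (for `k = 0, 1, …`): a fresh vertex label. -/
def rootVtx (d Q k : ℕ) : ℕ := d * (Q + 1) + k + 1

/-- The index of the block to which the `k`-th root vertex is attached in `T_r`
(`k = 0, …, r−1`).  Writing `r = aQ + b` with `b = r % Q`, the first `b` vertices are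
attached to `σ_{⌈Q/b⌉}, σ_{⌈2Q/b⌉}, …, σ_{⌈bQ/b⌉} = σ_Q` (coming from the base case
`T_b`), and the remaining `aQ` vertices are attached cyclically to `σ_1, …, σ_Q`
(`a` full rounds), corresponding to the recursion `T_r = T_{r−Q} + (σ_1, …, σ_Q)`. -/
def target (Q r k : ℕ) : ℕ :=
  if k < r % Q then ((k + 1) * Q + (r % Q) - 1) / (r % Q)
  else (k - r % Q) % Q + 1

/-- The rooted `d`-tree `T_r`: the complex `T_0` together with, for each `k < r`, the
root vertex `rootVtx d Q k` attached to the `(d−1)`-simplex `σ_{target Q r k}`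
(attaching adds all sets `τ ∪ {v}` for `τ ⊆ σ`). -/
def Tr (d Q r : ℕ) : Finset (Finset ℕ) :=
  T0 d Q ∪ (Finset.range r).biUnion
    (fun k => (sigmaB d (target Q r k)).powerset.image (insert (rootVtx d Q k)))

/-- The set of vertex roots of `T_r`. -/
def rootSet (d Q r : ℕ) : Finset ℕ := (Finset.range r).image (rootVtx d Q)

/-- `e_C(S)`: the number of nonempty simplices of `C` with at least one vertex in `S`. -/
def eCount (C : Finset (Finset ℕ)) (S : Finset ℕ) : ℕ :=
  (C.filter (fun σ => σ.Nonempty ∧ (σ ∩ S).Nonempty)).card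

/-- The density `dens_C(S) = e_C(S)/|S|`. -/
noncomputable def dens (C : Finset (Finset ℕ)) (S : Finset ℕ) : ℝ :=
  (eCount C S : ℝ) / (S.card : ℝ)

/-- The vertex set of a complex. -/
def verts (C : Finset (Finset ℕ)) : Finset ℕ := C.sup id

/-- The unrooted vertices of `T_r`: all vertices except the simplex root `σ_0` and the
vertex roots. -/
def unrooted (d Q r : ℕ) : Finset ℕ :=
  verts (Tr d Q r) \ (sigmaB d 0 ∪ rootSet d Q r)

/-!
The set `U = (d, d(Q+1)]` of all unrooted vertices already has minimum density, so a minimizer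
of maximum cardinality is `U` itself, a union of all blocks.

Counting faces by their largest vertex, `e(S) = 2^d |S| + ∑_{v ∈ U \ S} (2^d - 2^(d - t_v)) +
∑_k (2^d - 2^(d - s_k))`, where `t_v` counts the vertices of `S` among the `d` predecessors of `v`
and `s_k = |σ_{target k} ∩ S|`. Concavity of `t ↦ 2^d - 2^(d-t)` reduces `dens S ≥ dens U` to
`r |S| ≤ Q (∑ t_v + ∑ s_k)`. As `T_r` attaches `⌊r m / Q⌋` roots to `σ_1, …, σ_m`, the prefix sums
of `Q · rootDeg - r` stay in `[-Q d, 0]`, so a run of `S` costs at most `Q · min d (length)`,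
which the vertex following it pays; the final run costs nothing since the total sum is `0`.
-/

section

open Finset

lemma sigmaB_eq_Ioc (d i : ℕ) : sigmaB d i = Ioc (i * d) ((i + 1) * d) :=
  Icc_add_one_left_eq_Ioc _ _

lemma card_sigmaB (d i : ℕ) : #(sigmaB d i) = d := by
  rw [sigmaB_eq_Ioc, Nat.card_Ioc, add_mul, one_mul, Nat.add_sub_cancel_left]

lemma sigmaB_subset_Ioc {d Q i : ℕ} (hi : 1 ≤ i) (hiQ : i ≤ Q) :
    sigmaB d i ⊆ Ioc d (d * (Q + 1)) := by
  rw [sigmaB_eq_Ioc]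
  exact Ioc_subset_Ioc (by nlinarith) (by nlinarith)

lemma mem_sigmaB_iff {d x t : ℕ} (hd : 0 < d) (hx : 0 < x) :
    x ∈ sigmaB d t ↔ t = (x - 1) / d := by
  rw [sigmaB_eq_Ioc, mem_Ioc]
  constructor
  · rintro ⟨h1, h2⟩
    exact (Nat.div_eq_of_lt_le (by omega) (by omega)).symm
  · rintro rfl
    have h1 := Nat.div_mul_le_self (x - 1) d
    have h2 := Nat.lt_div_mul_add (a := x - 1) hd
    rw [add_mul, one_mul]
    omega

lemma target_mem_Icc {Q : ℕ} (hQ : 0 < Q) (r k : ℕ) : target Q r k ∈ Icc 1 Q := by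
  rw [mem_Icc]
  unfold target
  split_ifs with hk
  · have hb : 0 < r % Q := by omega
    have h1 : Q ≤ (k + 1) * Q := Nat.le_mul_of_pos_left Q (Nat.succ_pos k)
    have h2 : (k + 1) * Q ≤ r % Q * Q := Nat.mul_le_mul_right Q hk
    rw [Nat.le_div_iff_mul_le hb, Nat.div_le_iff_le_mul_add_pred hb]
    generalize (k + 1) * Q = p at *
    omega
  · have := Nat.mod_lt (k - r % Q) hQ
    omega

lemma count_mod_lt {Q m : ℕ} (hm : m ≤ Q) (a : ℕ) :
    Nat.count (fun i => i % Q < m) (Q * a) = a * m := by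
  induction a with
  | zero => simp
  | succ a ih =>
    have hblock : {i ∈ range Q | i % Q < m} = range m := by
      ext i
      simp only [mem_filter, mem_range]
      constructor
      · rintro ⟨h1, h2⟩
        rwa [Nat.mod_eq_of_lt h1] at h2
      · intro h
        exact ⟨by omega, by rwa [Nat.mod_eq_of_lt (by omega)]⟩
    rw [Nat.mul_succ, Nat.count_add, ih]
    simp only [Nat.mul_add_mod, Nat.count_eq_card_filter_range, hblock, card_range]
    ring

lemma card_filter_target_le {Q : ℕ} (hQ : 0 < Q) (r : ℕ) {m : ℕ} (hm : m ≤ Q) :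
    #{k ∈ range r | target Q r k ≤ m} = r * m / Q := by
  set b := r % Q
  have hr : b + Q * (r / Q) = r := Nat.mod_add_div r Q
  have hsplit := Nat.count_add (fun k => target Q r k ≤ m) b (Q * (r / Q))
  rw [hr] at hsplit
  have hbase : {k ∈ range b | target Q r k ≤ m} = range (b * m / Q) := by
    ext k
    simp only [mem_filter, mem_range]
    have hbm : b * m / Q ≤ b :=
      Nat.div_le_of_le_mul (by rw [mul_comm Q]; exact Nat.mul_le_mul_left b hm)
    have hlt : k < b * m / Q ↔ (k + 1) * Q ≤ b * m := by
      rw [← Nat.le_div_iff_mul_le hQ]; omega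
    have hle : k < b → (target Q r k ≤ m ↔ (k + 1) * Q ≤ b * m) := fun hk => by
      rw [target, if_pos hk, Nat.div_le_iff_le_mul_add_pred (by omega),
        Nat.add_sub_assoc (by omega), Nat.add_le_add_iff_right]
    rw [hlt]
    exact ⟨fun ⟨hk, ht⟩ => (hle hk).1 ht, fun h => ⟨by omega, (hle (by omega)).2 h⟩⟩
  have hcycle : ∀ i, target Q r (b + i) ≤ m ↔ i % Q < m := by
    intro i
    rw [target, if_neg (by omega), show b + i - r % Q = i by omega]
    omega
  rw [← Nat.count_eq_card_filter_range, hsplit, Nat.count_eq_card_filter_range, hbase,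
    card_range]
  simp only [hcycle, count_mod_lt hm]
  conv_rhs => rw [← hr, add_mul, mul_assoc, Nat.add_mul_div_left _ _ hQ]

lemma card_filter_target_le_bounds {Q : ℕ} (hQ : 0 < Q) (r : ℕ) {m : ℕ} (hm : m ≤ Q) :
    -(Q : ℤ) < Q * #{k ∈ range r | target Q r k ≤ m} - r * m ∧
      (Q : ℤ) * #{k ∈ range r | target Q r k ≤ m} - r * m ≤ 0 := by
  rw [card_filter_target_le hQ r hm]
  have h1 := Nat.div_mul_le_self (r * m) Q
  have h2 := Nat.lt_div_mul_add (a := r * m) hQ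
  generalize r * m / Q = A at h1 h2
  zify at h1 h2
  constructor <;> linarith

def attachFaces (v : ℕ) (A : Finset ℕ) : Finset (Finset ℕ) := A.powerset.image (insert v)

lemma card_filter_powerset_inter_nonempty (A S : Finset ℕ) :
    #{τ ∈ A.powerset | (τ ∩ S).Nonempty} = 2 ^ #A - 2 ^ #(A \ S) := by
  have hdisj : {τ ∈ A.powerset | ¬(τ ∩ S).Nonempty} = (A \ S).powerset := by
    ext τ
    simp only [mem_filter, mem_powerset, not_nonempty_iff_eq_empty, ← disjoint_iff_inter_eq_empty,
      subset_sdiff]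
  have := card_filter_add_card_filter_not (s := A.powerset) (fun τ => (τ ∩ S).Nonempty)
  rw [hdisj, card_powerset, card_powerset] at this
  omega

lemma card_filter_attachFaces {v : ℕ} {A : Finset ℕ} (hv : v ∉ A) (S : Finset ℕ) :
    #{σ ∈ attachFaces v A | (σ ∩ S).Nonempty} =
      if v ∈ S then 2 ^ #A else 2 ^ #A - 2 ^ #(A \ S) := by
  rw [attachFaces, filter_image, card_image_of_injOn]
  · split_ifs with hvS
    · rw [filter_true_of_mem fun τ _ => ⟨v, mem_inter.2 ⟨mem_insert_self _ _, hvS⟩⟩,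
        card_powerset]
    · simp only [insert_inter_of_notMem hvS]
      exact card_filter_powerset_inter_nonempty A S
  · intro τ hτ τ' hτ' h
    have hτ : v ∉ τ := fun h' => hv (mem_powerset.1 (mem_filter.1 hτ).1 h')
    have hτ' : v ∉ τ' := fun h' => hv (mem_powerset.1 (mem_filter.1 hτ').1 h')
    simpa [erase_insert hτ, erase_insert hτ'] using congrArg (erase · v) h

lemma disjoint_attachFaces {v w : ℕ} {A B : Finset ℕ} (hA : ∀ a ∈ A, a < v)
    (hB : ∀ b ∈ B, b < w) (hvw : v ≠ w) : Disjoint (attachFaces v A) (attachFaces w B) := by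
  simp only [attachFaces, disjoint_left, mem_image, mem_powerset, not_exists, not_and]
  rintro _ ⟨τ, hτ, rfl⟩ τ' hτ' h
  have hv : v ∈ insert w τ' := h ▸ mem_insert_self v τ
  have hw : w ∈ insert v τ := h.symm ▸ mem_insert_self w τ'
  rcases mem_insert.1 hv with hv | hv
  · exact hvw hv
  rcases mem_insert.1 hw with hw | hw
  · exact hvw hw.symm
  have := hA w (hτ hw)
  have := hB v (hτ' hv)
  omega

lemma card_filter_biUnion {ι α : Type*} [DecidableEq α] {s : Finset ι} {t : ι → Finset α}
    (h : (s : Set ι).PairwiseDisjoint t) (p : α → Prop) [DecidablePred p] :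
    #{x ∈ s.biUnion t | p x} = ∑ i ∈ s, #{x ∈ t i | p x} := by
  rw [filter_biUnion, card_biUnion (h.mono fun i => filter_subset _ _)]

lemma filter_T0_exists_gt (d Q : ℕ) :
    {σ ∈ T0 d Q | ∃ u ∈ σ, d < u} =
      (Ioc d (d * (Q + 1))).biUnion fun v => attachFaces v (Ico (v - d) v) := by
  ext σ
  simp only [T0, attachFaces, mem_filter, mem_powerset, mem_biUnion, mem_image, mem_Ioc]
  constructor
  · rintro ⟨⟨hσ, hne, hspread⟩, u, hu, hdu⟩
    set v := σ.max' hne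
    have hvσ : v ∈ σ := max'_mem σ hne
    have hle : ∀ a ∈ σ, a ≤ v := fun a ha => le_max' σ a ha
    refine ⟨v, ⟨hdu.trans_le (hle u hu), (mem_Icc.1 (hσ hvσ)).2⟩, σ.erase v, fun a ha => ?_,
      insert_erase hvσ⟩
    have := hle a (mem_of_mem_erase ha)
    have := hspread v hvσ a (mem_of_mem_erase ha)
    have := ne_of_mem_erase ha
    rw [mem_Ico]
    omega
  · rintro ⟨v, ⟨hdv, hvn⟩, τ, hτ, rfl⟩
    have hτ' : ∀ a ∈ insert v τ, v - d ≤ a ∧ a ≤ v := by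
      intro a ha
      rcases mem_insert.1 ha with rfl | ha
      · omega
      · have := mem_Ico.1 (hτ ha); omega
    refine ⟨⟨fun a ha => ?_, insert_nonempty v τ, fun a ha b hb => ?_⟩, v, mem_insert_self v τ,
      hdv⟩
    · have := hτ' a ha; rw [mem_Icc]; omega
    · have := hτ' a ha; have := hτ' b hb; omega

lemma lt_rootVtx_of_le {d Q x : ℕ} (hx : x ≤ d * (Q + 1)) (k : ℕ) : x < rootVtx d Q k := by
  unfold rootVtx; omega

lemma lt_rootVtx_of_mem_sigmaB {d Q t x : ℕ} (ht : t ≤ Q) (hx : x ∈ sigmaB d t) (k : ℕ) :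
    x < rootVtx d Q k := by
  rw [sigmaB_eq_Ioc, mem_Ioc] at hx
  exact lt_rootVtx_of_le (hx.2.trans (by nlinarith)) k

lemma filter_Tr_eq {d Q r : ℕ} {S : Finset ℕ} (hS : S ⊆ Ioc d (d * (Q + 1))) :
    {σ ∈ Tr d Q r | σ.Nonempty ∧ (σ ∩ S).Nonempty} =
      {σ ∈ (Ioc d (d * (Q + 1))).biUnion fun v => attachFaces v (Ico (v - d) v) |
          (σ ∩ S).Nonempty} ∪
        {σ ∈ (range r).biUnion fun k => attachFaces (rootVtx d Q k) (sigmaB d (target Q r k)) |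
          (σ ∩ S).Nonempty} := by
  rw [Tr, filter_union, ← filter_T0_exists_gt, filter_filter]
  congr 1 <;> refine filter_congr fun σ hσ => ?_
  · constructor
    · rintro ⟨-, u, hu⟩
      exact ⟨⟨u, (mem_inter.1 hu).1, (mem_Ioc.1 (hS (mem_inter.1 hu).2)).1⟩, u, hu⟩
    · rintro ⟨-, u, hu⟩
      exact ⟨⟨u, (mem_inter.1 hu).1⟩, u, hu⟩
  · refine and_iff_right ?_
    obtain ⟨k, -, hk⟩ := mem_biUnion.1 hσ
    obtain ⟨τ, -, rfl⟩ := mem_image.1 hk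
    exact insert_nonempty _ _

lemma eCount_Tr {d Q : ℕ} (hQ : 0 < Q) (r : ℕ) {S : Finset ℕ}
    (hS : S ⊆ Ioc d (d * (Q + 1))) :
    eCount (Tr d Q r) S =
      ∑ v ∈ Ioc d (d * (Q + 1)), (if v ∈ S then 2 ^ d else 2 ^ d - 2 ^ #(Ico (v - d) v \ S)) +
        ∑ k ∈ range r, (2 ^ d - 2 ^ #(sigmaB d (target Q r k) \ S)) := by
  have htarget : ∀ k, target Q r k ≤ Q := fun k => (mem_Icc.1 (target_mem_Icc hQ r k)).2
  have hlow : ∀ v, ∀ a ∈ Ico (v - d) v, a < v := fun v a ha => (mem_Ico.1 ha).2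
  have hroot : ∀ k, ∀ a ∈ sigmaB d (target Q r k), a < rootVtx d Q k :=
    fun k a ha => lt_rootVtx_of_mem_sigmaB (htarget k) ha k
  have hdisj : Disjoint ((Ioc d (d * (Q + 1))).biUnion fun v => attachFaces v (Ico (v - d) v))
      ((range r).biUnion fun k => attachFaces (rootVtx d Q k) (sigmaB d (target Q r k))) :=
    (disjoint_biUnion_left _ _ _).2 fun v hv => (disjoint_biUnion_right _ _ _).2 fun k _ =>
      disjoint_attachFaces (hlow v) (hroot k) (lt_rootVtx_of_le (mem_Ioc.1 hv).2 k).ne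
  rw [eCount, filter_Tr_eq hS, card_union_of_disjoint (disjoint_filter_filter hdisj),
    card_filter_biUnion fun v _ w _ hvw => disjoint_attachFaces (hlow v) (hlow w) hvw,
    card_filter_biUnion fun k _ l _ hkl =>
      disjoint_attachFaces (hroot k) (hroot l) (by unfold rootVtx; omega)]
  congr 1
  · refine sum_congr rfl fun v hv => ?_
    rw [card_filter_attachFaces (fun h => lt_irrefl v (hlow v v h)), Nat.card_Ico,
      Nat.sub_sub_self (mem_Ioc.1 hv).1.le]
  · refine sum_congr rfl fun k _ => ?_
    rw [card_filter_attachFaces (fun h => lt_irrefl _ (hroot k _ h)), card_sigmaB,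
      if_neg fun h => (mem_Ioc.1 (hS h)).2.not_gt (lt_rootVtx_of_le le_rfl k)]

lemma eCount_Tr_unrooted {d Q : ℕ} (hQ : 0 < Q) (r : ℕ) :
    eCount (Tr d Q r) (Ioc d (d * (Q + 1))) = d * Q * 2 ^ d + r * (2 ^ d - 1) := by
  rw [eCount_Tr hQ r subset_rfl]
  have hblock : ∀ k, sigmaB d (target Q r k) \ Ioc d (d * (Q + 1)) = ∅ := fun k => by
    have := mem_Icc.1 (target_mem_Icc hQ r k)
    exact sdiff_eq_empty_iff_subset.2 (sigmaB_subset_Ioc this.1 this.2)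
  simp only [hblock, card_empty, pow_zero]
  rw [sum_congr rfl fun v hv => if_pos hv, sum_const, sum_const, Nat.card_Ioc, card_range,
    smul_eq_mul, smul_eq_mul, mul_add, mul_one, Nat.add_sub_cancel]

lemma mul_two_pow_sub_one_le (t u : ℕ) :
    t * (2 ^ (u + t) - 1) ≤ (u + t) * (2 ^ (u + t) - 2 ^ u) := by
  have hX : 1 ≤ 2 ^ u := Nat.one_le_two_pow
  have hY : t + 1 ≤ 2 ^ t := Nat.lt_two_pow_self
  have hXu : 2 ^ u ≤ u * 2 ^ u + 1 := by
    rcases u with _ | u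
    · simp
    · nlinarith
  rw [pow_add]
  have h1 : 1 ≤ 2 ^ u * 2 ^ t :=
    Nat.one_le_two_pow.trans (Nat.le_mul_of_pos_right _ (by positivity))
  have h2 : 2 ^ u ≤ 2 ^ u * 2 ^ t := Nat.le_mul_of_pos_right _ (by positivity)
  zify [h1, h2] at hX hY hXu ⊢
  nlinarith [mul_le_mul_of_nonneg_right (show (t : ℤ) ≤ 2 ^ t - 1 by linarith)
      (show (0 : ℤ) ≤ 2 ^ u - 1 by linarith),
    mul_le_mul_of_nonneg_right (show (2 : ℤ) ^ u - 1 ≤ u * 2 ^ u by linarith)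
      (show (0 : ℤ) ≤ 2 ^ t - 1 by linarith)]

/-- Concavity of `t ↦ 2 ^ #A - 2 ^ (#A - t)` between `t = 0` and `t = #A`. -/
lemma two_pow_sub_one_mul_card_inter_le (A S : Finset ℕ) :
    (2 ^ #A - 1) * #(A ∩ S) ≤ #A * (2 ^ #A - 2 ^ #(A \ S)) := by
  rw [← card_sdiff_add_card_inter A S, mul_comm]
  exact mul_two_pow_sub_one_le _ _

/-- The number of pairs `x ∈ S`, `v ∈ U \ S` with `v - d ≤ x < v`: the edges leaving `S` in the
`d`-th power of the path on `ℕ`. -/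
def pathBoundary (d : ℕ) (U S : Finset ℕ) : ℕ := ∑ v ∈ U \ S, #(Ico (v - d) v ∩ S)

/-- A run `(g, w]` of `S` costs at most `K · min d (w - g)`, and its last `min d (w - g)` vertices
lie in the window of `w + 1`. -/
lemma sum_Ioc_add_mul_card_window_nonneg {a n d K g w : ℕ} {f : ℕ → ℤ} {S : Finset ℕ}
    (hf : ∀ x ∈ Ioc a n, -(K : ℤ) ≤ f x)
    (hP : ∀ w ∈ Icc a n, -(K * d : ℤ) ≤ ∑ x ∈ Ioc a w, f x ∧ ∑ x ∈ Ioc a w, f x ≤ 0)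
    (hag : a ≤ g) (hgw : g ≤ w) (hwn : w ≤ n) (hgS : Ioc g w ⊆ S) :
    0 ≤ ∑ x ∈ Ioc g w, f x + K * #(Ico (w + 1 - d) (w + 1) ∩ S) := by
  have hwindow : min d (w - g) ≤ #(Ico (w + 1 - d) (w + 1) ∩ S) := by
    calc min d (w - g) = #(Ioc (max g (w - d)) w) := by rw [Nat.card_Ioc]; omega
      _ ≤ _ := card_le_card fun x hx => by
        have := mem_Ioc.1 hx
        exact mem_inter.2 ⟨mem_Ico.2 ⟨by omega, by omega⟩, hgS (mem_Ioc.2 ⟨by omega, this.2⟩)⟩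
  have hrun : -(K * min d (w - g) : ℤ) ≤ ∑ x ∈ Ioc g w, f x := by
    rcases le_total d (w - g) with h | h
    · have := sum_Ioc_consecutive f hag hgw
      have := hP w (mem_Icc.2 ⟨hag.trans hgw, hwn⟩)
      have := hP g (mem_Icc.2 ⟨hag, hgw.trans hwn⟩)
      rw [min_eq_left h]
      linarith
    · rw [min_eq_right h]
      calc -(K * (w - g : ℕ) : ℤ) = ∑ x ∈ Ioc g w, -(K : ℤ) := by
            rw [sum_const, Nat.card_Ioc, nsmul_eq_mul]; ring
        _ ≤ _ := sum_le_sum fun x hx => hf x (Ioc_subset_Ioc hag hwn hx)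
  have : (K * min d (w - g) : ℤ) ≤ K * #(Ico (w + 1 - d) (w + 1) ∩ S) := by
    exact_mod_cast Nat.mul_le_mul_left K hwindow
  linarith

lemma sum_add_mul_pathBoundary_nonneg {a n d K : ℕ} {f : ℕ → ℤ} {S : Finset ℕ}
    (hS : S ⊆ Ioc a n) (hf : ∀ x ∈ Ioc a n, -(K : ℤ) ≤ f x)
    (hP : ∀ w ∈ Icc a n, -(K * d : ℤ) ≤ ∑ x ∈ Ioc a w, f x ∧ ∑ x ∈ Ioc a w, f x ≤ 0)
    (hPn : ∑ x ∈ Ioc a n, f x = 0) :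
    0 ≤ ∑ x ∈ S, f x + K * pathBoundary d (Ioc a n) S := by
  set φ : ℕ → ℤ := fun x => if x ∈ S then f x else K * #(Ico (x - d) x ∩ S)
  have hφ : ∑ x ∈ S, f x + K * pathBoundary d (Ioc a n) S = ∑ x ∈ Ioc a n, φ x := by
    rw [sum_ite, filter_mem_eq_inter, inter_eq_right.2 hS, filter_notMem_eq_sdiff, pathBoundary,
      Nat.cast_sum, mul_sum]
  -- `g` is the last vertex `≤ w` outside `S`
  have key : ∀ w, a ≤ w → w ≤ n → ∃ g, a ≤ g ∧ g ≤ w ∧ Ioc g w ⊆ S ∧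
      ∑ x ∈ Ioc g w, f x ≤ ∑ x ∈ Ioc a w, φ x := by
    intro w haw
    induction w, haw using Nat.le_induction with
    | base => exact fun _ => ⟨a, le_rfl, le_rfl, by simp, by simp⟩
    | succ w haw ih =>
      intro hwn
      obtain ⟨g, hag, hgw, hgS, hsum⟩ := ih (by omega)
      rw [sum_Ioc_succ_top haw]
      by_cases hw : w + 1 ∈ S
      · have hφw : φ (w + 1) = f (w + 1) := if_pos hw
        refine ⟨g, hag, by omega, fun x hx => ?_, ?_⟩
        · rcases eq_or_ne x (w + 1) with rfl | hx'
          · exact hw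
          · exact hgS (mem_Ioc.2 ⟨(mem_Ioc.1 hx).1, by have := (mem_Ioc.1 hx).2; omega⟩)
        · rw [sum_Ioc_succ_top hgw]
          linarith
      · have hφw : φ (w + 1) = K * #(Ico (w + 1 - d) (w + 1) ∩ S) := if_neg hw
        refine ⟨w + 1, by omega, le_rfl, by simp, ?_⟩
        rw [Ioc_self, sum_empty, hφw]
        have := sum_Ioc_add_mul_card_window_nonneg hf hP hag hgw (by omega) hgS
        linarith
  rw [hφ]
  rcases lt_or_ge n a with hna | han
  · rw [Ioc_eq_empty (by omega), sum_empty]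
  obtain ⟨g, hag, hgn, -, hsum⟩ := key n han le_rfl
  have := sum_Ioc_consecutive f hag hgn
  have := (hP g (mem_Icc.2 ⟨hag, hgn⟩)).2
  linarith

/-- The number of vertex roots of `T_r` adjacent to `x`. -/
def rootDeg (d Q r x : ℕ) : ℕ := #{k ∈ range r | x ∈ sigmaB d (target Q r k)}

lemma sum_rootDeg (d Q r : ℕ) (T : Finset ℕ) :
    ∑ x ∈ T, rootDeg d Q r x = ∑ k ∈ range r, #(sigmaB d (target Q r k) ∩ T) := by
  simp only [rootDeg, card_filter]
  rw [sum_comm]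
  refine sum_congr rfl fun k _ => ?_
  rw [← card_filter, filter_mem_eq_inter, inter_comm]

lemma card_sigmaB_inter_Ioc {d t m e : ℕ} (ht : 1 ≤ t) (he : e < d) :
    #(sigmaB d t ∩ Ioc d ((m + 1) * d + e)) =
      (if t ≤ m then d - e else 0) + (if t ≤ m + 1 then e else 0) := by
  rw [sigmaB_eq_Ioc, Ioc_inter_Ioc, Nat.card_Ioc, max_eq_left (Nat.le_mul_of_pos_left d ht)]
  simp only [add_mul, one_mul]
  rcases lt_trichotomy t (m + 1) with h | rfl | h
  · have : t * d ≤ m * d := Nat.mul_le_mul_right d (by omega)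
    rw [if_pos (by omega), if_pos (by omega)]
    omega
  · rw [if_neg (by omega), if_pos le_rfl]
    simp only [add_mul, one_mul]
    omega
  · have : (m + 2) * d ≤ t * d := Nat.mul_le_mul_right d h
    rw [if_neg (by omega), if_neg (by omega)]
    simp only [add_mul] at this
    omega

lemma sum_rootDeg_Ioc {d Q : ℕ} (hQ : 0 < Q) (r : ℕ) {m e : ℕ} (he : e < d) :
    ∑ x ∈ Ioc d ((m + 1) * d + e), rootDeg d Q r x =
      (d - e) * #{k ∈ range r | target Q r k ≤ m} +
        e * #{k ∈ range r | target Q r k ≤ m + 1} := by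
  rw [sum_rootDeg, sum_congr rfl fun k _ =>
    card_sigmaB_inter_Ioc (mem_Icc.1 (target_mem_Icc hQ r k)).1 he, sum_add_distrib]
  simp only [sum_ite, sum_const, smul_eq_mul, mul_comm, zero_mul, add_zero]

/-- On a block the prefix sum interpolates linearly between its values `d (Q ⌊r m / Q⌋ - r m)`
at the block ends. -/
lemma prefix_sum_rootDeg_bounds {d Q : ℕ} (hd : 0 < d) (hQ : 0 < Q) (r : ℕ) {w : ℕ}
    (hw : w ∈ Icc d (d * (Q + 1))) :
    -(Q * d : ℤ) ≤ ∑ x ∈ Ioc d w, ((Q : ℤ) * rootDeg d Q r x - r) ∧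
      ∑ x ∈ Ioc d w, ((Q : ℤ) * rootDeg d Q r x - r) ≤ 0 := by
  obtain ⟨hdw, hwn⟩ := mem_Icc.1 hw
  obtain ⟨m, e, he, rfl⟩ : ∃ m e, e < d ∧ w = (m + 1) * d + e := by
    refine ⟨(w - d) / d, (w - d) % d, Nat.mod_lt _ hd, ?_⟩
    have := Nat.div_add_mod (w - d) d
    rw [add_mul, one_mul, mul_comm]
    omega
  rw [add_mul, one_mul] at hwn
  have hmQ : m ≤ Q := Nat.le_of_mul_le_mul_right (by rw [mul_comm Q]; nlinarith) hd
  set C := fun j => #{k ∈ range r | target Q r k ≤ j}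
  have hsum : ∑ x ∈ Ioc d ((m + 1) * d + e), ((Q : ℤ) * rootDeg d Q r x - r) =
      (d - e) * (Q * C m - r * m) + e * (Q * C (m + 1) - r * (m + 1)) := by
    rw [sum_sub_distrib, ← mul_sum, sum_const, Nat.card_Ioc, nsmul_eq_mul, ← Nat.cast_sum,
      sum_rootDeg_Ioc hQ r he, show (m + 1) * d + e - d = m * d + e by rw [add_mul, one_mul]; omega]
    push_cast [he.le]
    ring
  rw [hsum]
  obtain ⟨hA1, hA2⟩ := card_filter_target_le_bounds hQ r hmQ
  rcases Nat.eq_zero_or_pos e with rfl | hepos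
  · simp only [Nat.cast_zero, sub_zero, zero_mul, add_zero]
    constructor <;> nlinarith
  · obtain ⟨hB1, hB2⟩ := card_filter_target_le_bounds hQ r (m := m + 1) (by nlinarith)
    push_cast at hB1 hB2
    have hde : (0 : ℤ) ≤ d - e := by omega
    constructor
    · nlinarith [mul_le_mul_of_nonneg_left hA1.le hde,
        mul_le_mul_of_nonneg_left hB1.le (show (0 : ℤ) ≤ e by omega)]
    · nlinarith [mul_le_mul_of_nonneg_left hA2 hde,
        mul_le_mul_of_nonneg_left hB2 (show (0 : ℤ) ≤ e by omega)]

lemma neg_le_mul_rootDeg_sub {d Q : ℕ} (hd : 0 < d) (hQ : 0 < Q) (r : ℕ) {x : ℕ}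
    (hx : x ∈ Ioc d (d * (Q + 1))) : -(Q : ℤ) ≤ Q * rootDeg d Q r x - r := by
  obtain ⟨hdx, hxn⟩ := mem_Ioc.1 hx
  obtain ⟨j, hj⟩ : ∃ j, (x - 1) / d = j + 1 := by
    refine ⟨(x - 1) / d - 1, (Nat.sub_add_cancel ?_).symm⟩
    rw [Nat.le_div_iff_mul_le hd]
    omega
  have hjQ : j + 1 ≤ Q := by
    rw [← hj, ← Nat.lt_add_one_iff, Nat.div_lt_iff_lt_mul hd]
    rw [mul_comm] at hxn
    omega
  have hdeg : rootDeg d Q r x + #{k ∈ range r | target Q r k ≤ j} =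
      #{k ∈ range r | target Q r k ≤ j + 1} := by
    rw [rootDeg, filter_congr fun k _ => by rw [mem_sigmaB_iff hd (by omega), hj],
      ← card_union_of_disjoint (disjoint_filter.2 fun k _ h1 h2 => by omega), ← filter_or]
    exact congrArg card (filter_congr fun k _ => by omega)
  have hA := (card_filter_target_le_bounds hQ r (m := j) (by omega)).2
  have hB := (card_filter_target_le_bounds hQ r hjQ).1
  rw [← hdeg] at hB
  push_cast at hB
  linarith

lemma mul_card_le_mul_pathBoundary_add {d Q : ℕ} (hd : 0 < d) (hQ : 0 < Q) (r : ℕ) {S : Finset ℕ}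
    (hS : S ⊆ Ioc d (d * (Q + 1))) :
    r * #S ≤ Q * pathBoundary d (Ioc d (d * (Q + 1))) S +
      Q * ∑ k ∈ range r, #(sigmaB d (target Q r k) ∩ S) := by
  have hPn : ∑ x ∈ Ioc d (d * (Q + 1)), ((Q : ℤ) * rootDeg d Q r x - r) = 0 := by
    have hblock : ∀ k ∈ range r, #(sigmaB d (target Q r k) ∩ Ioc d (d * (Q + 1))) = d :=
      fun k _ => by
        have := mem_Icc.1 (target_mem_Icc hQ r k)
        rw [inter_eq_left.2 (sigmaB_subset_Ioc this.1 this.2), card_sigmaB]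
    rw [sum_sub_distrib, ← mul_sum, ← Nat.cast_sum, sum_rootDeg, sum_congr rfl hblock, sum_const,
      sum_const, card_range, Nat.card_Ioc, mul_add, mul_one, Nat.add_sub_cancel, smul_eq_mul,
      nsmul_eq_mul]
    push_cast
    ring
  have := sum_add_mul_pathBoundary_nonneg hS (fun x hx => neg_le_mul_rootDeg_sub hd hQ r hx)
    (fun w hw => prefix_sum_rootDeg_bounds hd hQ r hw) hPn
  rw [sum_sub_distrib, ← mul_sum, ← Nat.cast_sum, sum_rootDeg, sum_const, nsmul_eq_mul] at this
  push_cast at this ⊢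
  linarith

lemma card_mul_eCount_unrooted_le {d Q : ℕ} (hd : 0 < d) (hQ : 0 < Q) (r : ℕ) {S : Finset ℕ}
    (hS : S ⊆ Ioc d (d * (Q + 1))) :
    #S * eCount (Tr d Q r) (Ioc d (d * (Q + 1))) ≤
      #(Ioc d (d * (Q + 1))) * eCount (Tr d Q r) S := by
  have hU : #(Ioc d (d * (Q + 1))) = d * Q := by
    rw [Nat.card_Ioc, mul_add, mul_one, Nat.add_sub_cancel]
  rw [eCount_Tr_unrooted hQ, eCount_Tr hQ r hS, hU, sum_ite, filter_mem_eq_inter,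
    inter_eq_right.2 hS, filter_notMem_eq_sdiff, sum_const, smul_eq_mul]
  have hwindows : (2 ^ d - 1) * pathBoundary d (Ioc d (d * (Q + 1))) S ≤
      d * ∑ v ∈ Ioc d (d * (Q + 1)) \ S, (2 ^ d - 2 ^ #(Ico (v - d) v \ S)) := by
    rw [pathBoundary, mul_sum, mul_sum]
    refine sum_le_sum fun v hv => ?_
    have hcard : #(Ico (v - d) v) = d := by
      rw [Nat.card_Ico]; have := (mem_Ioc.1 (mem_sdiff.1 hv).1).1; omega
    simpa only [hcard] using two_pow_sub_one_mul_card_inter_le (Ico (v - d) v) S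
  have hroots : (2 ^ d - 1) * ∑ k ∈ range r, #(sigmaB d (target Q r k) ∩ S) ≤
      d * ∑ k ∈ range r, (2 ^ d - 2 ^ #(sigmaB d (target Q r k) \ S)) := by
    rw [mul_sum, mul_sum]
    refine sum_le_sum fun k _ => ?_
    simpa only [card_sigmaB] using two_pow_sub_one_mul_card_inter_le (sigmaB d (target Q r k)) S
  have := Nat.mul_le_mul_left (2 ^ d - 1) (mul_card_le_mul_pathBoundary_add hd hQ r hS)
  have := Nat.mul_le_mul_left Q hwindows
  have := Nat.mul_le_mul_left Q hroots
  nlinarith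

lemma verts_Tr {d Q : ℕ} (hQ : 0 < Q) (r : ℕ) :
    verts (Tr d Q r) = Icc 1 (d * (Q + 1)) ∪ rootSet d Q r := by
  apply Subset.antisymm
  · refine Finset.sup_le fun σ hσ => ?_
    rcases mem_union.1 hσ with hσ | hσ
    · exact (mem_powerset.1 (mem_filter.1 hσ).1).trans subset_union_left
    · obtain ⟨k, hk, hσ⟩ := mem_biUnion.1 hσ
      obtain ⟨τ, hτ, rfl⟩ := mem_image.1 hσ
      have ht := mem_Icc.1 (target_mem_Icc hQ r k)
      refine insert_subset (mem_union_right _ (mem_image_of_mem _ hk)) fun x hx => ?_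
      have := mem_Ioc.1 (sigmaB_subset_Ioc ht.1 ht.2 (mem_powerset.1 hτ hx))
      exact mem_union_left _ (mem_Icc.2 ⟨by omega, this.2⟩)
  · intro v hv
    refine mem_sup.2 ?_
    rcases mem_union.1 hv with hv | hv
    · refine ⟨{v}, mem_union_left _ (mem_filter.2 ⟨?_, singleton_nonempty v, ?_⟩),
        mem_singleton_self v⟩
      · simpa using hv
      · simp
    · obtain ⟨k, hk, rfl⟩ := mem_image.1 hv
      exact ⟨{rootVtx d Q k}, mem_union_right _ (mem_biUnion.2 ⟨k, hk,
        mem_image.2 ⟨∅, empty_mem_powerset _, rfl⟩⟩), mem_singleton_self _⟩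

lemma unrooted_eq {d Q : ℕ} (hQ : 0 < Q) (r : ℕ) : unrooted d Q r = Ioc d (d * (Q + 1)) := by
  ext v
  simp only [unrooted, verts_Tr hQ, sigmaB, rootSet, rootVtx, mem_sdiff, mem_union, mem_Icc,
    mem_Ioc, mem_image, mem_range]
  constructor
  · rintro ⟨hv | ⟨k, hk, rfl⟩, hv'⟩
    · omega
    · exact absurd (Or.inr ⟨k, hk, rfl⟩) hv'
  · rintro ⟨h1, h2⟩
    refine ⟨Or.inl ⟨by omega, h2⟩, ?_⟩
    rintro (h | ⟨k, -, rfl⟩) <;> omega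

end

lemma dens_unrooted_le {d Q : ℕ} (hd : 0 < d) (hQ : 0 < Q) (r : ℕ) {S : Finset ℕ}
    (hS : S ⊆ unrooted d Q r) (hne : S.Nonempty) :
    dens (Tr d Q r) (unrooted d Q r) ≤ dens (Tr d Q r) S := by
  rw [unrooted_eq hQ] at hS ⊢
  rw [dens, dens, div_le_div_iff₀ (by exact_mod_cast (hne.mono hS).card_pos)
    (by exact_mod_cast hne.card_pos)]
  exact_mod_cast (mul_comm _ _).trans_le
    ((card_mul_eCount_unrooted_le hd hQ r hS).trans_eq (mul_comm _ _))

/-- **Lemma (structure of maximal minimizers).** Let `d, Q ≥ 1` and `r ≥ 0`.  If `S` is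
a nonempty set of unrooted vertices of `T_r` of minimal density, of maximum cardinality
among such minimizers, then for every `1 ≤ i ≤ Q` either `S ∩ σ_i = ∅` or `σ_i ⊆ S`;
that is, `S` is a union of some of the blocks `σ_1, …, σ_Q`. -/
theorem Tr_minimizer_blocks (d Q r : ℕ) (hd : 1 ≤ d) (hQ : 1 ≤ Q)
    (S : Finset ℕ) (hSU : S ⊆ unrooted d Q r) (hSne : S.Nonempty)
    (hmin : ∀ S' ⊆ unrooted d Q r, S'.Nonempty →
      dens (Tr d Q r) S ≤ dens (Tr d Q r) S')
    (hmax : ∀ S' ⊆ unrooted d Q r, S'.Nonempty →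
      dens (Tr d Q r) S' = dens (Tr d Q r) S → S'.card ≤ S.card) :
    ∀ i : ℕ, 1 ≤ i → i ≤ Q → S ∩ sigmaB d i = ∅ ∨ sigmaB d i ⊆ S := by
  intro i hi hiQ
  have hUne : (unrooted d Q r).Nonempty := hSne.mono hSU
  have hdens : dens (Tr d Q r) (unrooted d Q r) = dens (Tr d Q r) S :=
    (dens_unrooted_le hd hQ r hSU hSne).antisymm (hmin _ subset_rfl hUne)
  have hSU' : S = unrooted d Q r :=
    Finset.eq_of_subset_of_card_le hSU (hmax _ subset_rfl hUne hdens)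
  right
  rw [hSU', unrooted_eq hQ]
  exact sigmaB_subset_Ioc hi hiQ
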